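/- Let σ_1, σ_2 : ℝ^N → (0,∞] be screening functions with 0 < inf_{ℝ^N} σ_i ≤ sup_{ℝ^N} σ_i < ∞ for i = 1, 2. Then for every 0 < s < 1 and 1 ≤ p < ∞ there exist constants c_0, c_1 > 0 (depending on s, p, N, σ_1, σ_2) such that c_0 |f|_{W̃^{s,p}_{(σ_2)}(ℝ^N)} ≤ |f|_{W̃^{s,p}_{(σ_1)}(ℝ^N)} ≤ c_1 |f|_{W̃^{s,p}_{(σ_2)}(ℝ^N)} for all f ∈ L¹_loc(ℝ^N); in particular W̃^{s,p}_{(σ_1)}(ℝ^N) = W̃^{s,p}_{(σ_2)}(ℝ^N) as sets. -/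

import Mathlib

/-! For screening functions pinched between `m > 0` and `M`, the screened energy is squeezed
between the energies over the balls `B(0, m)` and `B(0, M)`, so it suffices to bound the energy
over a large ball by the energy over a small one. By Tonelli the energy over `B(0, ρ)` is
`∫_{B(0,ρ)} G(h) |h|^{-q} dh` with `G(h) = ∫ |f(x + h) - f(x)|^p dx`. Translation invariance
gives the quasi-triangle inequality `G(2h) ≤ C G(h)`, and the substitution `h = 2h'` then shows
that doubling the radius multiplies the energy by at most a fixed constant; finitely many
doublings reach `M`. -/

open MeasureTheory Metric
open scoped ENNReal

/-- The screened homogeneous fractional Sobolev seminorm on all of `ℝ^N`: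
`|f|_{W̃^{s,p}_{(σ)}(ℝ^N)} = (∫_{ℝ^N} ∫_{B(0,σ(x))} |f(x+h)-f(x)|^p / |h|^{sp+N} dh dx)^{1/p}`,
valued in `ℝ≥0∞`. -/
noncomputable def screenedSeminormR (N : ℕ) (s p : ℝ)
    (σ : EuclideanSpace ℝ (Fin N) → ℝ≥0∞)
    (f : EuclideanSpace ℝ (Fin N) → ℝ) : ℝ≥0∞ :=
  (∫⁻ x, ∫⁻ h in {h : EuclideanSpace ℝ (Fin N) | (‖h‖₊ : ℝ≥0∞) < σ x},
      ENNReal.ofReal (|f (x + h) - f x| ^ p / ‖h‖ ^ (s * p + N))) ^ (1 / p)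

open Module

lemma ENNReal.ofReal_abs_rpow {p : ℝ} (hp : 0 ≤ p) (y : ℝ) :
    ENNReal.ofReal (|y| ^ p) = ‖y‖ₑ ^ p := by
  rw [Real.enorm_eq_ofReal_abs, ENNReal.ofReal_rpow_of_nonneg (abs_nonneg y) hp]

lemma ENNReal.ofReal_abs_add_rpow_le {p : ℝ} (hp : 0 ≤ p) (a b : ℝ) :
    ENNReal.ofReal (|a + b| ^ p) ≤
      LpAddConst (ENNReal.ofReal p)⁻¹ * (ENNReal.ofReal (|a| ^ p) + ENNReal.ofReal (|b| ^ p)) := by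
  simp only [ENNReal.ofReal_abs_rpow hp]
  calc ‖a + b‖ₑ ^ p ≤ (‖a‖ₑ + ‖b‖ₑ) ^ p := ENNReal.rpow_le_rpow (enorm_add_le a b) hp
    _ ≤ _ := ENNReal.rpow_add_le_mul_rpow_add_rpow' _ _ hp

lemma setOf_nnnorm_lt_ofReal {E : Type*} [SeminormedAddCommGroup E] (ρ : ℝ) :
    {h : E | (‖h‖₊ : ℝ≥0∞) < ENNReal.ofReal ρ} = ball 0 ρ := by
  ext h
  simp [ENNReal.coe_lt_ofReal]

namespace MeasureTheory.Measure

variable {E : Type*} [NormedAddCommGroup E] [NormedSpace ℝ E] [MeasurableSpace E] [BorelSpace E]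
  [FiniteDimensional ℝ E] (μ : Measure E) [μ.IsAddHaarMeasure]

lemma lintegral_comp_inv_smul (g : E → ℝ≥0∞) {c : ℝ} (hc : c ≠ 0) :
    ∫⁻ x, g (c⁻¹ • x) ∂μ = ENNReal.ofReal (|c| ^ finrank ℝ E) * ∫⁻ x, g x ∂μ := by
  have h := lintegral_map_equiv (μ := μ) g (MeasurableEquiv.smul₀ c⁻¹ (inv_ne_zero hc))
  rw [MeasurableEquiv.coe_smul₀, map_addHaar_smul μ (inv_ne_zero hc), lintegral_smul_measure,
    smul_eq_mul, inv_pow, inv_inv, abs_pow] at h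
  exact h.symm

end MeasureTheory.Measure

section Energies

variable {E : Type*} [NormedAddCommGroup E] [MeasurableSpace E]

noncomputable def translationEnergy (μ : Measure E) (p : ℝ) (f : E → ℝ) (h : E) : ℝ≥0∞ :=
  ∫⁻ x, ENNReal.ofReal (|f (x + h) - f x| ^ p) ∂μ

noncomputable def screenedEnergy (μ : Measure E) (p q : ℝ) (σ : E → ℝ≥0∞) (f : E → ℝ) :
    ℝ≥0∞ :=
  ∫⁻ x, ∫⁻ h in {h | (‖h‖₊ : ℝ≥0∞) < σ x},
    ENNReal.ofReal (|f (x + h) - f x| ^ p / ‖h‖ ^ q) ∂μ ∂μ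

variable (μ : Measure E) {p q : ℝ}

lemma screenedEnergy_mono {σ σ' : E → ℝ≥0∞} (hσ : ∀ x, σ x ≤ σ' x) (f : E → ℝ) :
    screenedEnergy μ p q σ f ≤ screenedEnergy μ p q σ' f :=
  lintegral_mono fun x => lintegral_mono_set fun _ hh => lt_of_lt_of_le hh (hσ x)

lemma screenedEnergy_congr_ae [MeasurableAdd E] [μ.IsAddLeftInvariant] (σ : E → ℝ≥0∞)
    {f g : E → ℝ} (hfg : f =ᵐ[μ] g) :
    screenedEnergy μ p q σ f = screenedEnergy μ p q σ g := by
  refine lintegral_congr_ae ?_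
  filter_upwards [hfg] with x hx
  have hshift : (fun h => f (x + h)) =ᵐ[μ] fun h => g (x + h) :=
    (measurePreserving_add_left μ x).quasiMeasurePreserving.ae_eq_comp hfg
  refine lintegral_congr_ae (ae_restrict_of_ae ?_)
  filter_upwards [hshift] with h hh
  rw [hh, hx]

variable [MeasurableAdd₂ E] {f : E → ℝ}

lemma translationEnergy_add_le [μ.IsAddRightInvariant] (hp : 0 ≤ p) (hf : Measurable f)
    (a b : E) :
    translationEnergy μ p f (a + b) ≤ ENNReal.LpAddConst (ENNReal.ofReal p)⁻¹ *
      (translationEnergy μ p f a + translationEnergy μ p f b) := by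
  set C := ENNReal.LpAddConst (ENNReal.ofReal p)⁻¹
  have hsplit : ∀ x, f (x + (a + b)) - f x = (f (x + a + b) - f (x + a)) + (f (x + a) - f x) :=
    fun x => by rw [add_assoc]; ring
  calc translationEnergy μ p f (a + b)
      ≤ ∫⁻ x, C * (ENNReal.ofReal (|f (x + a + b) - f (x + a)| ^ p)
          + ENNReal.ofReal (|f (x + a) - f x| ^ p)) ∂μ :=
        lintegral_mono fun x => hsplit x ▸ ENNReal.ofReal_abs_add_rpow_le hp _ _
    _ = C * (translationEnergy μ p f b + translationEnergy μ p f a) := by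
        rw [lintegral_const_mul' _ _ (ENNReal.LpAddConst_lt_top _).ne,
          lintegral_add_right _ (by fun_prop),
          lintegral_add_right_eq_self (fun y => ENNReal.ofReal (|f (y + b) - f y| ^ p)) a]
        rfl
    _ = _ := by rw [add_comm (translationEnergy μ p f b)]

-- Writing the weight with the real inverse keeps the identity exact at `h = 0`, where both sides
-- use `x / 0 = 0`.
lemma screenedEnergy_const_eq [SFinite μ] [OpensMeasurableSpace E] (hf : Measurable f) (ρ : ℝ) :
    screenedEnergy μ p q (fun _ => ENNReal.ofReal ρ) f =
      ∫⁻ h in ball 0 ρ, translationEnergy μ p f h * ENNReal.ofReal ((‖h‖ ^ q)⁻¹) ∂μ := by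
  simp only [screenedEnergy, setOf_nnnorm_lt_ofReal]
  rw [lintegral_lintegral_swap (by fun_prop)]
  refine lintegral_congr fun h => ?_
  simp_rw [div_eq_mul_inv, ENNReal.ofReal_mul (by positivity : (0:ℝ) ≤ |_| ^ p)]
  exact lintegral_mul_const' _ _ ENNReal.ofReal_ne_top

end Energies

section Haar

variable {E : Type*} [NormedAddCommGroup E] [NormedSpace ℝ E] [MeasurableSpace E] [BorelSpace E]
  [FiniteDimensional ℝ E] (μ : Measure E) [μ.IsAddHaarMeasure] {p q : ℝ} {f : E → ℝ}

lemma setLIntegral_ball_mul (g : E → ℝ≥0∞) {c : ℝ} (hc : 0 < c) (ρ : ℝ) :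
    ∫⁻ x in ball 0 (c * ρ), g x ∂μ =
      ENNReal.ofReal (c ^ finrank ℝ E) * ∫⁻ x in ball 0 ρ, g (c • x) ∂μ := by
  have hind : ∀ x, (ball (0 : E) (c * ρ)).indicator g x =
      (ball (0 : E) ρ).indicator (fun y => g (c • y)) (c⁻¹ • x) := by
    intro x
    classical
    simp only [Set.indicator_apply, mem_ball_zero_iff, norm_smul, Real.norm_eq_abs, abs_inv,
      abs_of_pos hc, smul_inv_smul₀ hc.ne', inv_mul_lt_iff₀ hc]
  rw [← lintegral_indicator measurableSet_ball, ← lintegral_indicator measurableSet_ball,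
    funext hind, Measure.lintegral_comp_inv_smul μ _ hc.ne', abs_of_pos hc]

lemma translationEnergy_two_smul_le (hp : 0 ≤ p) (hf : Measurable f) (h : E) :
    translationEnergy μ p f ((2 : ℝ) • h) ≤
      2 * ENNReal.LpAddConst (ENNReal.ofReal p)⁻¹ * translationEnergy μ p f h := by
  rw [two_smul, mul_comm 2, mul_assoc, two_mul]
  exact translationEnergy_add_le μ hp hf h h

lemma screenedEnergy_const_two_mul_le (hp : 0 ≤ p) (hf : Measurable f) (ρ : ℝ) :
    screenedEnergy μ p q (fun _ => ENNReal.ofReal (2 * ρ)) f ≤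
      2 ^ finrank ℝ E * (2 * ENNReal.LpAddConst (ENNReal.ofReal p)⁻¹ * ENNReal.ofReal (2 ^ q)⁻¹) *
        screenedEnergy μ p q (fun _ => ENNReal.ofReal ρ) f := by
  set D := 2 * ENNReal.LpAddConst (ENNReal.ofReal p)⁻¹ * ENNReal.ofReal (2 ^ q)⁻¹
  set G := translationEnergy μ p f
  have hpoint : ∀ h : E, G ((2 : ℝ) • h) * ENNReal.ofReal (‖(2 : ℝ) • h‖ ^ q)⁻¹ ≤
      D * (G h * ENNReal.ofReal (‖h‖ ^ q)⁻¹) := fun h => by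
    rw [norm_smul, Real.norm_two, Real.mul_rpow zero_le_two (norm_nonneg h), mul_inv,
      ENNReal.ofReal_mul (by positivity)]
    calc G ((2 : ℝ) • h) * (ENNReal.ofReal (2 ^ q)⁻¹ * ENNReal.ofReal (‖h‖ ^ q)⁻¹)
        ≤ 2 * ENNReal.LpAddConst (ENNReal.ofReal p)⁻¹ * G h *
            (ENNReal.ofReal (2 ^ q)⁻¹ * ENNReal.ofReal (‖h‖ ^ q)⁻¹) := by
          gcongr; exact translationEnergy_two_smul_le μ hp hf h
      _ = D * (G h * ENNReal.ofReal (‖h‖ ^ q)⁻¹) := by ring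
  rw [screenedEnergy_const_eq μ hf, screenedEnergy_const_eq μ hf, mul_assoc]
  calc ∫⁻ h in ball 0 (2 * ρ), G h * ENNReal.ofReal (‖h‖ ^ q)⁻¹ ∂μ
      = 2 ^ finrank ℝ E * ∫⁻ h in ball 0 ρ,
          G ((2 : ℝ) • h) * ENNReal.ofReal (‖(2 : ℝ) • h‖ ^ q)⁻¹ ∂μ := by
        rw [setLIntegral_ball_mul μ _ two_pos, ENNReal.ofReal_pow zero_le_two, ENNReal.ofReal_ofNat]
    _ ≤ 2 ^ finrank ℝ E * ∫⁻ h in ball 0 ρ, D * (G h * ENNReal.ofReal (‖h‖ ^ q)⁻¹) ∂μ :=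
        mul_le_mul_right (lintegral_mono hpoint) _
    _ = _ := by
        have := ENNReal.LpAddConst_lt_top (ENNReal.ofReal p)⁻¹
        rw [lintegral_const_mul' _ _ (by finiteness)]

lemma exists_screenedEnergy_const_le_mul (q : ℝ) (hp : 0 ≤ p) {r : ℝ} (hr : 0 < r) (R : ℝ) :
    ∃ C : ℝ≥0∞, C ≠ ∞ ∧ ∀ f : E → ℝ, Measurable f →
      screenedEnergy μ p q (fun _ => ENNReal.ofReal R) f ≤
        C * screenedEnergy μ p q (fun _ => ENNReal.ofReal r) f := by
  set D : ℝ≥0∞ := 2 ^ finrank ℝ E *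
    (2 * ENNReal.LpAddConst (ENNReal.ofReal p)⁻¹ * ENNReal.ofReal (2 ^ q)⁻¹)
  have hD : D ≠ ∞ := by
    have := ENNReal.LpAddConst_lt_top (ENNReal.ofReal p)⁻¹
    finiteness
  obtain ⟨k, hk⟩ := pow_unbounded_of_one_lt (R / r) one_lt_two
  refine ⟨D ^ k, ENNReal.pow_ne_top hD, fun f hf => ?_⟩
  have hiter : ∀ n : ℕ, screenedEnergy μ p q (fun _ => ENNReal.ofReal (2 ^ n * r)) f ≤
      D ^ n * screenedEnergy μ p q (fun _ => ENNReal.ofReal r) f := by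
    intro n
    induction n with
    | zero => simp
    | succ n ih =>
      calc screenedEnergy μ p q (fun _ => ENNReal.ofReal (2 ^ (n + 1) * r)) f
          ≤ D * screenedEnergy μ p q (fun _ => ENNReal.ofReal (2 ^ n * r)) f := by
            rw [pow_succ', mul_assoc]; exact screenedEnergy_const_two_mul_le μ hp hf _
        _ ≤ D * (D ^ n * screenedEnergy μ p q (fun _ => ENNReal.ofReal r) f) :=
            mul_le_mul_right ih D
        _ = D ^ (n + 1) * screenedEnergy μ p q (fun _ => ENNReal.ofReal r) f := by ring
  refine le_trans (screenedEnergy_mono μ (fun _ => ?_) f) (hiter k)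
  exact ENNReal.ofReal_le_ofReal ((div_lt_iff₀ hr).1 hk).le

lemma exists_screenedEnergy_le_mul (q : ℝ) (hp : 0 ≤ p) {σ₁ σ₂ : E → ℝ≥0∞} {m M : ℝ}
    (hm : 0 < m) (hσ₁ : ∀ x, σ₁ x ≤ ENNReal.ofReal M) (hσ₂ : ∀ x, ENNReal.ofReal m ≤ σ₂ x) :
    ∃ C : ℝ≥0∞, C ≠ ∞ ∧ ∀ f : E → ℝ, AEMeasurable f μ →
      screenedEnergy μ p q σ₁ f ≤ C * screenedEnergy μ p q σ₂ f := by
  obtain ⟨C, hC, hle⟩ := exists_screenedEnergy_const_le_mul μ q hp hm M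
  refine ⟨C, hC, fun f hf => ?_⟩
  rw [screenedEnergy_congr_ae μ σ₁ hf.ae_eq_mk, screenedEnergy_congr_ae μ σ₂ hf.ae_eq_mk]
  calc screenedEnergy μ p q σ₁ (hf.mk f)
      ≤ screenedEnergy μ p q (fun _ => ENNReal.ofReal M) (hf.mk f) :=
        screenedEnergy_mono μ hσ₁ _
    _ ≤ C * screenedEnergy μ p q (fun _ => ENNReal.ofReal m) (hf.mk f) :=
        hle _ hf.measurable_mk
    _ ≤ C * screenedEnergy μ p q σ₂ (hf.mk f) :=
        mul_le_mul_right (screenedEnergy_mono μ hσ₂ _) C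

end Haar

lemma exists_screenedSeminormR_le_mul {N : ℕ} {s p : ℝ} (hp : 0 ≤ p)
    {σ₁ σ₂ : EuclideanSpace ℝ (Fin N) → ℝ≥0∞} {m M : ℝ} (hm : 0 < m)
    (hσ₁ : ∀ x, σ₁ x ≤ ENNReal.ofReal M) (hσ₂ : ∀ x, ENNReal.ofReal m ≤ σ₂ x) :
    ∃ c : ℝ, 0 < c ∧ ∀ f : EuclideanSpace ℝ (Fin N) → ℝ, LocallyIntegrable f →
      screenedSeminormR N s p σ₁ f ≤ ENNReal.ofReal c * screenedSeminormR N s p σ₂ f := by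
  obtain ⟨C, hC, hle⟩ := exists_screenedEnergy_le_mul volume (s * p + N) hp hm hσ₁ hσ₂
  have hCc : C ≤ ENNReal.ofReal (C.toReal + 1) :=
    (ENNReal.le_ofReal_iff_toReal_le hC (by positivity)).2 (by linarith)
  refine ⟨(C.toReal + 1) ^ (1 / p), by positivity, fun f hf => ?_⟩
  calc screenedSeminormR N s p σ₁ f
      = screenedEnergy volume p (s * p + N) σ₁ f ^ (1 / p) := rfl
    _ ≤ (ENNReal.ofReal (C.toReal + 1) * screenedEnergy volume p (s * p + N) σ₂ f) ^ (1 / p) := by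
        gcongr
        exact (hle f hf.aestronglyMeasurable.aemeasurable).trans (by gcongr)
    _ = ENNReal.ofReal ((C.toReal + 1) ^ (1 / p)) * screenedSeminormR N s p σ₂ f := by
        rw [ENNReal.mul_rpow_of_nonneg _ _ (by positivity),
          ENNReal.ofReal_rpow_of_pos (by positivity)]
        rfl

theorem statement13_general (N : ℕ) (σ₁ σ₂ : EuclideanSpace ℝ (Fin N) → ℝ≥0∞)
    (hσ₁bd : ∃ m M : ℝ, 0 < m ∧
      ∀ x, ENNReal.ofReal m ≤ σ₁ x ∧ σ₁ x ≤ ENNReal.ofReal M)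
    (hσ₂bd : ∃ m M : ℝ, 0 < m ∧
      ∀ x, ENNReal.ofReal m ≤ σ₂ x ∧ σ₂ x ≤ ENNReal.ofReal M)
    (s p : ℝ) (hp : 1 ≤ p) :
    ∃ c₀ c₁ : ℝ, 0 < c₀ ∧ 0 < c₁ ∧
      ∀ f : EuclideanSpace ℝ (Fin N) → ℝ, LocallyIntegrable f →
        (ENNReal.ofReal c₀ * screenedSeminormR N s p σ₂ f
            ≤ screenedSeminormR N s p σ₁ f ∧
         screenedSeminormR N s p σ₁ f
            ≤ ENNReal.ofReal c₁ * screenedSeminormR N s p σ₂ f ∧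
         (screenedSeminormR N s p σ₁ f < ⊤ ↔ screenedSeminormR N s p σ₂ f < ⊤)) := by
  obtain ⟨m₁, M₁, hm₁, hσ₁⟩ := hσ₁bd
  obtain ⟨m₂, M₂, hm₂, hσ₂⟩ := hσ₂bd
  have hp₀ : 0 ≤ p := zero_le_one.trans hp
  obtain ⟨c₁, hc₁, h₁₂⟩ := exists_screenedSeminormR_le_mul (s := s) hp₀ hm₂
    (fun x => (hσ₁ x).2) (fun x => (hσ₂ x).1)
  obtain ⟨c₂, hc₂, h₂₁⟩ := exists_screenedSeminormR_le_mul (s := s) hp₀ hm₁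
    (fun x => (hσ₂ x).2) (fun x => (hσ₁ x).1)
  refine ⟨c₂⁻¹, c₁, inv_pos.2 hc₂, hc₁, fun f hf => ⟨?_, h₁₂ f hf, ?_, ?_⟩⟩
  · rw [ENNReal.ofReal_inv_of_pos hc₂, ENNReal.inv_mul_le_iff (by simpa) ENNReal.ofReal_ne_top]
    exact h₂₁ f hf
  · exact fun h => (h₂₁ f hf).trans_lt (ENNReal.mul_lt_top ENNReal.ofReal_lt_top h)
  · exact fun h => (h₁₂ f hf).trans_lt (ENNReal.mul_lt_top ENNReal.ofReal_lt_top h)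

/-- Let `σ₁, σ₂ : ℝ^N → (0,∞]` be screening functions bounded above
and below by positive finite constants.  Then for every `0 < s < 1` and `1 ≤ p < ∞`
there exist constants `c₀, c₁ > 0` such that
`c₀ |f|_{W̃^{s,p}_{(σ₂)}} ≤ |f|_{W̃^{s,p}_{(σ₁)}} ≤ c₁ |f|_{W̃^{s,p}_{(σ₂)}}` for all
`f ∈ L¹_loc(ℝ^N)`; in particular the two screened spaces coincide. -/
theorem statement13 (N : ℕ) (σ₁ σ₂ : EuclideanSpace ℝ (Fin N) → ℝ≥0∞)
    (hσ₁lsc : LowerSemicontinuous σ₁) (hσ₂lsc : LowerSemicontinuous σ₂)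
    (hσ₁bd : ∃ m M : ℝ, 0 < m ∧
      ∀ x, ENNReal.ofReal m ≤ σ₁ x ∧ σ₁ x ≤ ENNReal.ofReal M)
    (hσ₂bd : ∃ m M : ℝ, 0 < m ∧
      ∀ x, ENNReal.ofReal m ≤ σ₂ x ∧ σ₂ x ≤ ENNReal.ofReal M)
    (s p : ℝ) (hs0 : 0 < s) (hs1 : s < 1) (hp : 1 ≤ p) :
    ∃ c₀ c₁ : ℝ, 0 < c₀ ∧ 0 < c₁ ∧
      ∀ f : EuclideanSpace ℝ (Fin N) → ℝ, LocallyIntegrable f →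
        (ENNReal.ofReal c₀ * screenedSeminormR N s p σ₂ f
            ≤ screenedSeminormR N s p σ₁ f ∧
         screenedSeminormR N s p σ₁ f
            ≤ ENNReal.ofReal c₁ * screenedSeminormR N s p σ₂ f ∧
         (screenedSeminormR N s p σ₁ f < ⊤ ↔ screenedSeminormR N s p σ₂ f < ⊤)) :=
  statement13_general N σ₁ σ₂ hσ₁bd hσ₂bd s p hp
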